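/- If h ∈ H² and f ∈ H² satisfy h² = z f² a.e. on the unit circle, then f = h = 0. -/

import Mathlib

open MeasureTheory Complex Filter Matrix

noncomputable section

namespace HankelPaper

instance : Fact (0 < 2 * Real.pi) := ⟨by positivity⟩

/-- The circle, modeled as `ℝ / 2πℤ`. -/
abbrev 𝕋 := AddCircle (2 * Real.pi)

/-- Normalized Haar (Lebesgue) measure on the circle. -/
abbrev μT : Measure 𝕋 := AddCircle.haarAddCircle

/-- The coordinate function `z` on the unit circle. -/
def zf : 𝕋 → ℂ := fun x => fourier 1 x

/-- All Fourier coefficients of negative index vanish (analyticity). -/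
def NegVanish (f : 𝕋 → ℂ) : Prop := ∀ n : ℤ, n < 0 → fourierCoeff f n = 0

/-- The Hardy space `H¹`. -/
def MemH1 (f : 𝕋 → ℂ) : Prop := Integrable f μT ∧ NegVanish f

/-- The Hardy space `H²`. -/
def MemH2 (f : 𝕋 → ℂ) : Prop := MemLp f 2 μT ∧ NegVanish f

/-- The Hardy space `H^∞`. -/
def MemHinf (f : 𝕋 → ℂ) : Prop := MemLp f ⊤ μT ∧ NegVanish f

/-- `f` is of bounded type (Nevanlinna class): a quotient of two `H^∞` functions. -/
def BddType (f : 𝕋 → ℂ) : Prop :=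
  ∃ g h : 𝕋 → ℂ, MemHinf g ∧ MemHinf h ∧ ¬ h =ᵐ[μT] 0 ∧
    f =ᵐ[μT] fun x => g x / h x

/-- `N^∞` : essentially bounded functions of bounded type. -/
def MemNinf (f : 𝕋 → ℂ) : Prop := BddType f ∧ MemLp f ⊤ μT

/-- A scalar inner function. -/
def IsInner (θ : 𝕋 → ℂ) : Prop := MemHinf θ ∧ ∀ᵐ x ∂μT, ‖θ x‖ = 1

/- Vector-valued versions (coordinatewise). -/
def MemH1V {n : ℕ} (f : 𝕋 → Fin n → ℂ) : Prop := ∀ j, MemH1 fun x => f x j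
def MemH2V {n : ℕ} (f : 𝕋 → Fin n → ℂ) : Prop := ∀ j, MemH2 fun x => f x j
def MemL2V {n : ℕ} (f : 𝕋 → Fin n → ℂ) : Prop := ∀ j, MemLp (fun x => f x j) 2 μT
def BddTypeV {n : ℕ} (f : 𝕋 → Fin n → ℂ) : Prop := ∀ j, BddType fun x => f x j

/-- Entrywise `L²` matrix-valued functions. -/
def MemL2M {n m : ℕ} (Φ : 𝕋 → Matrix (Fin n) (Fin m) ℂ) : Prop :=
  ∀ i j, MemLp (fun x => Φ x i j) 2 μT

/-- The `j`-th column of a matrix-valued function. -/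
def colF {n m : ℕ} (Φ : 𝕋 → Matrix (Fin n) (Fin m) ℂ) (j : Fin m) : 𝕋 → Fin n → ℂ :=
  fun x i => Φ x i j

/-- The subfamily `{φ i : i ∈ s}` is independent modulo the Nevanlinna class. -/
def IndepModN {n : ℕ} {ι : Type*} (φ : ι → 𝕋 → Fin n → ℂ) (s : Finset ι) : Prop :=
  ∀ a : ι → 𝕋 → ℂ, (∀ i, BddType (a i)) →
    BddTypeV (fun x j => ∑ i ∈ s, a i x * φ i x j) →
    ∀ i ∈ s, a i =ᵐ[μT] 0

/-- The independency (degree of independence) modulo the Nevanlinna class of a finite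
family: the maximal cardinality of an independent subfamily. -/
def indN {n : ℕ} {ι : Type*} (φ : ι → 𝕋 → Fin n → ℂ) : ℕ :=
  sSup {k | ∃ s : Finset ι, IndepModN φ s ∧ s.card = k}

/-- The kernel of the block Hankel operator `H_Φ` : those `f ∈ H²_{ℂᵐ}` with `Φ f ∈ H¹_{ℂⁿ}`. -/
def hankelKer {n m : ℕ} (Φ : 𝕋 → Matrix (Fin n) (Fin m) ℂ) : Set (𝕋 → Fin m → ℂ) :=
  {f | MemH2V f ∧ ∀ i : Fin n, MemH1 fun x => ∑ j, Φ x i j * f x j}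

/-- A matrix-valued inner function: entries in `H^∞` and a.e. isometric values. -/
def IsMatrixInner {n m : ℕ} (Θ : 𝕋 → Matrix (Fin n) (Fin m) ℂ) : Prop :=
  (∀ i j, MemHinf fun x => Θ x i j) ∧ ∀ᵐ x ∂μT, (Θ x)ᴴ * Θ x = 1

/-- The shift-invariant subspace `Θ H²_{ℂᵐ}` (as a set of functions, up to null sets). -/
def thetaH2 {n m : ℕ} (Θ : 𝕋 → Matrix (Fin n) (Fin m) ℂ) : Set (𝕋 → Fin n → ℂ) :=
  {f | ∃ h : 𝕋 → Fin m → ℂ, MemH2V h ∧ f =ᵐ[μT] fun x => (Θ x).mulVec (h x)}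

/-- `Rank F` : the essential supremum of the pointwise rank. -/
def essRank {n m : ℕ} (F : 𝕋 → Matrix (Fin n) (Fin m) ℂ) : ℕ :=
  sInf {k | ∀ᵐ x ∂μT, (F x).rank ≤ k}

/-- The backward shift `S*` on scalar functions: `(S* f)(z) = z̄ (f(z) - f̂(0))`. -/
def backShift (f : 𝕋 → ℂ) : 𝕋 → ℂ :=
  fun x => fourier (-1) x * (f x - fourierCoeff f 0)

/-- The backward shift on vector-valued functions, coordinatewise. -/
def backShiftV {n : ℕ} (f : 𝕋 → Fin n → ℂ) : 𝕋 → Fin n → ℂ :=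
  fun x j => backShift (fun y => f y j) x

/-!
Measure a nonzero analytic `L²` function by its lowest nonvanishing Fourier index. By Parseval the
Fourier coefficients of a product of two `L²` functions are the convolution of their coefficients,
so lowest indices add under multiplication, and multiplication by `z` raises the lowest index by
one. Hence `h²` has even lowest index and `z f²` odd lowest index, so `h² = z f²` forces `f = 0`,
and then `h² = 0`.
-/

section FourierOrder

open ComplexConjugate AddCircle

variable {T : ℝ} [Fact (0 < T)]

theorem ae_eq_zero_of_fourierCoeff_eq_zero {g : AddCircle T → ℂ} (hg : MemLp g 2 haarAddCircle)
    (hcoeff : ∀ n, fourierCoeff g n = 0) : g =ᵐ[haarAddCircle] 0 := by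
  have hrepr : fourierBasis.repr (hg.toLp g) = 0 := by
    ext n
    simp [fourierBasis_repr, fourierCoeff_congr_ae hg.coeFn_toLp, hcoeff]
  have hzero : hg.toLp g = 0 := fourierBasis.repr.map_eq_zero_iff.1 hrepr
  exact hg.coeFn_toLp.symm.trans (by rw [hzero]; exact Lp.coeFn_zero _ _ _)

theorem integral_conj_mul_eq_tsum_fourierCoeff {u v : AddCircle T → ℂ}
    (hu : MemLp u 2 haarAddCircle) (hv : MemLp v 2 haarAddCircle) :
    ∫ x, conj (u x) * v x ∂haarAddCircle
      = ∑' k, conj (fourierCoeff u k) * fourierCoeff v k := by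
  have hparseval := fourierBasis.repr.inner_map_map (hu.toLp u) (hv.toLp v)
  rw [lp.inner_eq_tsum, L2.inner_def] at hparseval
  simp only [fourierBasis_repr, fourierCoeff_congr_ae hu.coeFn_toLp,
    fourierCoeff_congr_ae hv.coeFn_toLp, RCLike.inner_apply] at hparseval
  rw [tsum_congr fun k => mul_comm _ _, hparseval]
  refine integral_congr_ae ?_
  filter_upwards [hu.coeFn_toLp, hv.coeFn_toLp] with x hux hvx
  rw [hux, hvx, mul_comm]

theorem fourierCoeff_fourier_mul (m : ℤ) (g : AddCircle T → ℂ) (n : ℤ) :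
    fourierCoeff (fun x => fourier m x * g x) n = fourierCoeff g (n - m) := by
  unfold fourierCoeff
  congr 1 with x
  rw [smul_eq_mul, smul_eq_mul, show -(n - m) = -n + m by ring, fourier_add]
  ring

theorem fourierCoeff_conj_mul_fourier (g : AddCircle T → ℂ) (n k : ℤ) :
    fourierCoeff (fun x => conj (g x) * fourier n x) k = conj (fourierCoeff g (n - k)) := by
  unfold fourierCoeff
  rw [← integral_conj]
  congr 1 with x
  simp only [smul_eq_mul, map_mul, ← fourier_neg, neg_neg]
  rw [sub_eq_neg_add, fourier_add]
  ring

theorem fourierCoeff_mul_eq_tsum {g₁ g₂ : AddCircle T → ℂ} (hg₁ : MemLp g₁ 2 haarAddCircle)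
    (hg₂ : MemLp g₂ 2 haarAddCircle) (n : ℤ) :
    fourierCoeff (fun x => g₁ x * g₂ x) n
      = ∑' k, fourierCoeff g₁ (n - k) * fourierCoeff g₂ k := by
  have hu : MemLp (fun x => conj (g₁ x) * fourier n x) 2 haarAddCircle := by
    refine hg₁.of_le ((continuous_conj.comp_aestronglyMeasurable hg₁.1).mul
      (fourier n).continuous.aestronglyMeasurable) (.of_forall fun x => ?_)
    simp [Circle.norm_coe]
  calc fourierCoeff (fun x => g₁ x * g₂ x) n
      = ∫ x, conj (conj (g₁ x) * fourier n x) * g₂ x ∂haarAddCircle := by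
        unfold fourierCoeff
        congr 1 with x
        simp only [smul_eq_mul, map_mul, conj_conj, fourier_neg]
        ring
    _ = ∑' k, fourierCoeff g₁ (n - k) * fourierCoeff g₂ k := by
        simp only [integral_conj_mul_eq_tsum_fourierCoeff hu hg₂, fourierCoeff_conj_mul_fourier,
          conj_conj]

def HasFourierOrder (g : AddCircle T → ℂ) (a : ℤ) : Prop :=
  fourierCoeff g a ≠ 0 ∧ ∀ n < a, fourierCoeff g n = 0

namespace HasFourierOrder

variable {g g₁ g₂ : AddCircle T → ℂ} {a b : ℤ}

theorem congr_ae (hg : HasFourierOrder g₁ a) (h : g₁ =ᵐ[haarAddCircle] g₂) :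
    HasFourierOrder g₂ a := by
  rwa [HasFourierOrder, ← fourierCoeff_congr_ae h]

theorem not_ae_eq_zero (hg : HasFourierOrder g a) : ¬ g =ᵐ[haarAddCircle] 0 := fun h =>
  (hg.congr_ae h).1 (by simp [fourierCoeff])

theorem unique (ha : HasFourierOrder g a) (hb : HasFourierOrder g b) : a = b := by
  by_contra hab
  rcases Ne.lt_or_gt hab with hlt | hlt
  · exact ha.1 (hb.2 a hlt)
  · exact hb.1 (ha.2 b hlt)

theorem fourier_mul (hg : HasFourierOrder g a) (m : ℤ) :
    HasFourierOrder (fun x => fourier m x * g x) (a + m) := by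
  simp only [HasFourierOrder, fourierCoeff_fourier_mul, add_sub_cancel_right]
  exact ⟨hg.1, fun n hn => hg.2 _ (by omega)⟩

theorem mul (ha : HasFourierOrder g₁ a) (hb : HasFourierOrder g₂ b)
    (hg₁ : MemLp g₁ 2 haarAddCircle) (hg₂ : MemLp g₂ 2 haarAddCircle) :
    HasFourierOrder (fun x => g₁ x * g₂ x) (a + b) := by
  have hterm : ∀ n k, (n < a + b ∨ (n = a + b ∧ k ≠ b)) →
      fourierCoeff g₁ (n - k) * fourierCoeff g₂ k = 0 := by
    intro n k hnk
    rcases lt_or_ge k b with hk | hk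
    · rw [hb.2 k hk, mul_zero]
    · rw [ha.2 (n - k) (by omega), zero_mul]
  simp only [HasFourierOrder, fourierCoeff_mul_eq_tsum hg₁ hg₂]
  refine ⟨?_, fun n hn => (tsum_congr fun k => hterm n k (.inl hn)).trans tsum_zero⟩
  rw [tsum_eq_single b fun k hk => hterm _ k (.inr ⟨rfl, hk⟩), add_sub_cancel_right]
  exact mul_ne_zero ha.1 hb.1

end HasFourierOrder

theorem exists_hasFourierOrder {g : AddCircle T → ℂ} (hg : MemLp g 2 haarAddCircle)
    (hneg : ∀ n < 0, fourierCoeff g n = 0) (hg0 : ¬ g =ᵐ[haarAddCircle] 0) :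
    ∃ a, HasFourierOrder g a := by
  have hex : ∃ n, fourierCoeff g n ≠ 0 := by
    by_contra! h
    exact hg0 (ae_eq_zero_of_fourierCoeff_eq_zero hg h)
  obtain ⟨a, ha, hmin⟩ := Int.exists_least_of_bdd
    ⟨0, fun n hn => not_lt.1 fun h => hn (hneg n h)⟩ hex
  exact ⟨a, ha, fun n hn => by_contra fun h => (hmin n h).not_gt hn⟩

end FourierOrder

/-- if `h, f ∈ H²` and `h² = z f²` a.e. then `f = h = 0`. -/
theorem stmt2 (h f : 𝕋 → ℂ) (hh : MemH2 h) (hf : MemH2 f)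
    (heq : ∀ᵐ x ∂μT, h x ^ 2 = zf x * f x ^ 2) :
    f =ᵐ[μT] 0 ∧ h =ᵐ[μT] 0 := by
  have hf0 : f =ᵐ[μT] 0 := by
    by_contra hf0
    obtain ⟨b, hb⟩ := exists_hasFourierOrder hf.1 hf.2 hf0
    have hhh : HasFourierOrder (fun x => h x * h x) (b + b + 1) := by
      refine ((hb.mul hb hf.1 hf.1).fourier_mul 1).congr_ae ?_
      filter_upwards [heq] with x hx
      rw [← sq, ← sq, hx, zf]
    have hh0 : ¬ h =ᵐ[μT] 0 := fun hh0 =>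
      hhh.not_ae_eq_zero (by filter_upwards [hh0] with x hx; simp [hx])
    obtain ⟨a, ha⟩ := exists_hasFourierOrder hh.1 hh.2 hh0
    have hparity : a + a = b + b + 1 := (ha.mul ha hh.1 hh.1).unique hhh
    omega
  refine ⟨hf0, ?_⟩
  filter_upwards [heq, hf0] with x hx hfx
  simpa [hfx] using hx

end HankelPaper
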